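/- Let G₁ and G₂ be finite simple bipartite graphs on vertex sets ZMod n₁ and ZMod n₂ (n₁, n₂ ≥ 1) with bipartitions B₁ ∪ C₁ and B₂ ∪ C₂. Suppose every vertex of G₁ and every vertex of G₂ has even degree, and both labelings are balanced: for every vertex i of G_m, δ₊(G_m, i) − δ₋(G_m, i) equals deg(i) mod 2, where δ₊(G_m, i) is the number of neighbors of i of the form i + ℓ (mod n_m) with 0 < ℓ ≤ n_m/2 and δ₋(G_m, i) = deg(i) − δ₊(G_m, i). Let T = G₁ □ G₂ with directed-edge spanning subgraphs T_N, T_S, T_E, T_W. Then deg(T_N) + deg(T_S) + deg(T_E) + deg(T_W) = deg(T) = deg(G₁) + deg(G₂), where deg(·) denotes maximum degree. -/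

import Mathlib

open scoped Classical

/-- Qubit vertices `(B₁ × B₂) ∪ (C₁ × C₂)` of the hypergraph product. -/
def qubitSet {n₁ n₂ : ℕ} (B₁ C₁ : Set (ZMod n₁)) (B₂ C₂ : Set (ZMod n₂)) :
    Set (ZMod n₁ × ZMod n₂) :=
  (B₁ ×ˢ B₂) ∪ (C₁ ×ˢ C₂)

/-- Stabilizer vertices `(B₁ × C₂) ∪ (C₁ × B₂)` of the hypergraph product. -/
def stabSet {n₁ n₂ : ℕ} (B₁ C₁ : Set (ZMod n₁)) (B₂ C₂ : Set (ZMod n₂)) :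
    Set (ZMod n₁ × ZMod n₂) :=
  (B₁ ×ˢ C₂) ∪ (C₁ ×ˢ B₂)

/-- The direction-`N` spanning subgraph of the box product `T = G₁ □ G₂`: vertical edges whose
stabilizer endpoint `(i, j)` and qubit endpoint `(i, j + ℓ)` (with `ℓ ∈ {1, …, n₂ - 1}`)
satisfy `ℓ ≤ n₂ / 2`, i.e. `2 * ℓ ≤ n₂`. Here `ℓ` is recovered as `(j' - j).val`. -/
def dirN {n₁ n₂ : ℕ} (G₁ : SimpleGraph (ZMod n₁)) (G₂ : SimpleGraph (ZMod n₂))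
    (stab : Set (ZMod n₁ × ZMod n₂)) : SimpleGraph (ZMod n₁ × ZMod n₂) where
  Adj p q := (G₁.boxProd G₂).Adj p q ∧ p.1 = q.1 ∧
    ((p ∈ stab ∧ 2 * (q.2 - p.2).val ≤ n₂) ∨ (q ∈ stab ∧ 2 * (p.2 - q.2).val ≤ n₂))
  symm := ⟨fun _ _ ⟨h1, h2, h3⟩ => ⟨h1.symm, h2.symm, h3.symm⟩⟩
  loopless := ⟨fun p ⟨h1, _, _⟩ => (G₁.boxProd G₂).loopless.irrefl p h1⟩

/-- The direction-`S` spanning subgraph: vertical edges with `ℓ > n₂ / 2`. -/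
def dirS {n₁ n₂ : ℕ} (G₁ : SimpleGraph (ZMod n₁)) (G₂ : SimpleGraph (ZMod n₂))
    (stab : Set (ZMod n₁ × ZMod n₂)) : SimpleGraph (ZMod n₁ × ZMod n₂) where
  Adj p q := (G₁.boxProd G₂).Adj p q ∧ p.1 = q.1 ∧
    ((p ∈ stab ∧ n₂ < 2 * (q.2 - p.2).val) ∨ (q ∈ stab ∧ n₂ < 2 * (p.2 - q.2).val))
  symm := ⟨fun _ _ ⟨h1, h2, h3⟩ => ⟨h1.symm, h2.symm, h3.symm⟩⟩
  loopless := ⟨fun p ⟨h1, _, _⟩ => (G₁.boxProd G₂).loopless.irrefl p h1⟩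

/-- The direction-`E` spanning subgraph: horizontal edges whose stabilizer endpoint `(i, j)` and
qubit endpoint `(i + ℓ, j)` satisfy `ℓ ≤ n₁ / 2`, i.e. `2 * ℓ ≤ n₁`. -/
def dirE {n₁ n₂ : ℕ} (G₁ : SimpleGraph (ZMod n₁)) (G₂ : SimpleGraph (ZMod n₂))
    (stab : Set (ZMod n₁ × ZMod n₂)) : SimpleGraph (ZMod n₁ × ZMod n₂) where
  Adj p q := (G₁.boxProd G₂).Adj p q ∧ p.2 = q.2 ∧
    ((p ∈ stab ∧ 2 * (q.1 - p.1).val ≤ n₁) ∨ (q ∈ stab ∧ 2 * (p.1 - q.1).val ≤ n₁))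
  symm := ⟨fun _ _ ⟨h1, h2, h3⟩ => ⟨h1.symm, h2.symm, h3.symm⟩⟩
  loopless := ⟨fun p ⟨h1, _, _⟩ => (G₁.boxProd G₂).loopless.irrefl p h1⟩

/-- The direction-`W` spanning subgraph: horizontal edges with `ℓ > n₁ / 2`. -/
def dirW {n₁ n₂ : ℕ} (G₁ : SimpleGraph (ZMod n₁)) (G₂ : SimpleGraph (ZMod n₂))
    (stab : Set (ZMod n₁ × ZMod n₂)) : SimpleGraph (ZMod n₁ × ZMod n₂) where
  Adj p q := (G₁.boxProd G₂).Adj p q ∧ p.2 = q.2 ∧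
    ((p ∈ stab ∧ n₁ < 2 * (q.1 - p.1).val) ∨ (q ∈ stab ∧ n₁ < 2 * (p.1 - q.1).val))
  symm := ⟨fun _ _ ⟨h1, h2, h3⟩ => ⟨h1.symm, h2.symm, h3.symm⟩⟩
  loopless := ⟨fun p ⟨h1, _, _⟩ => (G₁.boxProd G₂).loopless.irrefl p h1⟩

/-- `δ₊(G, j)`: the number of neighbors of `j` of the form `j + ℓ (mod n)` with
`0 < ℓ ≤ n / 2` (i.e. `2 * ℓ ≤ n`). -/
noncomputable def deltaPlus {n : ℕ} (G : SimpleGraph (ZMod n)) (j : ZMod n) : ℕ :=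
  {j' | G.Adj j j' ∧ 0 < (j' - j).val ∧ 2 * (j' - j).val ≤ n}.ncard

/-- `δ₋(G, j) = deg(j) - δ₊(G, j)`. -/
noncomputable def deltaMinus {n : ℕ} [NeZero n] (G : SimpleGraph (ZMod n)) (j : ZMod n) : ℕ :=
  G.degree j - deltaPlus G j

/-!
At a vertex of even degree, balance says that exactly half of its neighbours are a forward step
`ℓ ≤ n / 2` away and half a backward step. Reversing edges and double counting shows there are no
antipodal edges `2 ℓ = n`, so the same split holds when lengths are measured towards the vertex.
Since the stabilizer set alternates along every edge of `T`, a vertex `p` has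
`deg_{G₂}(p.2) / 2` neighbours in each of `T_N`, `T_S` and `deg_{G₁}(p.1) / 2` in each of
`T_E`, `T_W`. Taking maxima, `deg(T_N) + deg(T_S) = deg(G₂)` and `deg(T_E) + deg(T_W) = deg(G₁)`,
while `deg(T) = deg(G₁) + deg(G₂)`.
-/

open Finset SimpleGraph

theorem ZMod.val_sub_rev {n : ℕ} [NeZero n] {a b : ZMod n} (h : a ≠ b) :
    (a - b).val = n - (b - a).val := by
  have : NeZero (b - a) := ⟨sub_ne_zero.mpr h.symm⟩
  rw [← neg_sub b a, ZMod.val_neg_of_ne_zero]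

theorem SimpleGraph.val_sub_pos_of_adj {n : ℕ} {G : SimpleGraph (ZMod n)} {j j' : ZMod n}
    (h : G.Adj j j') : 0 < (j' - j).val :=
  Nat.pos_of_ne_zero fun h0 => h.ne' (sub_eq_zero.mp ((ZMod.val_eq_zero _).mp h0))

section CyclicGraph

variable {n : ℕ} [NeZero n] {G : SimpleGraph (ZMod n)}

theorem two_mul_val_sub_lt_iff_of_adj {j j' : ZMod n} (h : G.Adj j j') :
    2 * (j - j').val < n ↔ n < 2 * (j' - j).val := by
  have := ZMod.val_sub_rev h.ne
  have := ZMod.val_lt (j' - j)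
  omega

variable (G) in
theorem deltaPlus_eq_card_filter (j : ZMod n) :
    deltaPlus G j = #{j' ∈ G.neighborFinset j | 2 * (j' - j).val ≤ n} := by
  rw [deltaPlus, ← Set.ncard_coe_finset]
  congr 1
  ext j'
  simp only [coe_filter, mem_neighborFinset, Set.mem_ofPred_eq]
  exact ⟨fun ⟨h, _, hle⟩ => ⟨h, hle⟩, fun ⟨h, hle⟩ => ⟨h, val_sub_pos_of_adj h, hle⟩⟩

variable (G) in
theorem card_forward_add_card_backward (j : ZMod n) :
    #{j' ∈ G.neighborFinset j | 2 * (j' - j).val ≤ n} +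
      #{j' ∈ G.neighborFinset j | n < 2 * (j' - j).val} = G.degree j := by
  simp only [← not_le]
  exact card_filter_add_card_filter_not _

theorem two_mul_card_forward_eq_degree {j : ZMod n} (heven : Even (G.degree j))
    (hbal : (deltaPlus G j : ℤ) - (deltaMinus G j : ℤ) = (G.degree j : ℤ) % 2) :
    2 * #{j' ∈ G.neighborFinset j | 2 * (j' - j).val ≤ n} = G.degree j := by
  have hsplit := card_forward_add_card_backward G j
  rw [deltaMinus, deltaPlus_eq_card_filter, Nat.cast_sub (by omega)] at hbal
  have := Nat.even_iff.mp heven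
  omega

theorem two_mul_card_backward_eq_degree
    (hhalf : ∀ j, 2 * #{j' ∈ G.neighborFinset j | 2 * (j' - j).val ≤ n} = G.degree j)
    (j : ZMod n) :
    2 * #{j' ∈ G.neighborFinset j | n < 2 * (j' - j).val} = G.degree j := by
  have := card_forward_add_card_backward G j
  have := hhalf j
  omega

/-- Reversing an edge turns a backward step of length `ℓ` into a forward step of length `n - ℓ`,
so in total there are as many backward steps as strictly forward ones, hence (by `hhalf`) as many
strictly forward steps as forward ones. -/
theorem two_mul_val_sub_ne_of_adj
    (hhalf : ∀ j, 2 * #{j' ∈ G.neighborFinset j | 2 * (j' - j).val ≤ n} = G.degree j)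
    {j j' : ZMod n} (hadj : G.Adj j j') : 2 * (j' - j).val ≠ n := by
  let r : ZMod n → ZMod n → Prop := fun a b => G.Adj a b ∧ n < 2 * (b - a).val
  have hreverse : ∑ j, #{j' ∈ G.neighborFinset j | n < 2 * (j' - j).val} =
      ∑ j, #{j' ∈ G.neighborFinset j | 2 * (j' - j).val < n} :=
    calc ∑ j, #{j' ∈ G.neighborFinset j | n < 2 * (j' - j).val}
        = ∑ j, #(univ.bipartiteAbove r j) := by
          refine sum_congr rfl fun j _ => congrArg card ?_
          ext; simp [bipartiteAbove, r]
      _ = ∑ j, #(univ.bipartiteBelow r j) := sum_card_bipartiteAbove_eq_sum_card_bipartiteBelow _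
      _ = ∑ j, #{j' ∈ G.neighborFinset j | 2 * (j' - j).val < n} := by
          refine sum_congr rfl fun j _ => congrArg card ?_
          ext j'
          simp only [bipartiteBelow, r, mem_filter, mem_univ, true_and, mem_neighborFinset]
          exact ⟨fun ⟨h, hlt⟩ => ⟨h.symm, (two_mul_val_sub_lt_iff_of_adj h).mpr hlt⟩,
            fun ⟨h, hlt⟩ => ⟨h.symm, (two_mul_val_sub_lt_iff_of_adj h.symm).mp hlt⟩⟩
  have hstrict : ∀ j, {j' ∈ G.neighborFinset j | 2 * (j' - j).val < n} =
      {j' ∈ G.neighborFinset j | 2 * (j' - j).val ≤ n} := by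
    have hsub : ∀ j, {j' ∈ G.neighborFinset j | 2 * (j' - j).val < n} ⊆
        {j' ∈ G.neighborFinset j | 2 * (j' - j).val ≤ n} :=
      fun j => monotone_filter_right _ fun _ _ => le_of_lt
    have hsum : ∑ j, #{j' ∈ G.neighborFinset j | 2 * (j' - j).val < n} =
        ∑ j, #{j' ∈ G.neighborFinset j | 2 * (j' - j).val ≤ n} := by
      rw [← hreverse]
      refine sum_congr rfl fun j _ => ?_
      have := hhalf j
      have := two_mul_card_backward_eq_degree hhalf j
      omega
    intro j
    refine eq_of_subset_of_card_le (hsub j) ?_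
    exact ((sum_eq_sum_iff_of_le fun j _ => card_le_card (hsub j)).mp hsum j (mem_univ j)).ge
  intro hanti
  have hmem : j' ∈ {j' ∈ G.neighborFinset j | 2 * (j' - j).val < n} := by
    rw [hstrict, mem_filter, mem_neighborFinset]
    exact ⟨hadj, hanti.le⟩
  exact (mem_filter.mp hmem).2.ne hanti

theorem two_mul_card_reverse_forward_eq_degree
    (hhalf : ∀ j, 2 * #{j' ∈ G.neighborFinset j | 2 * (j' - j).val ≤ n} = G.degree j)
    (j : ZMod n) :
    2 * #{j' ∈ G.neighborFinset j | 2 * (j - j').val ≤ n} = G.degree j := by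
  rw [← two_mul_card_backward_eq_degree hhalf j]
  congr 2
  refine filter_congr fun j' hj' => ?_
  have hadj := (mem_neighborFinset _ _ _).mp hj'
  rw [← two_mul_val_sub_lt_iff_of_adj hadj]
  have := two_mul_val_sub_ne_of_adj hhalf hadj.symm
  omega

theorem two_mul_card_reverse_backward_eq_degree
    (hhalf : ∀ j, 2 * #{j' ∈ G.neighborFinset j | 2 * (j' - j).val ≤ n} = G.degree j)
    (j : ZMod n) :
    2 * #{j' ∈ G.neighborFinset j | n < 2 * (j - j').val} = G.degree j := by
  rw [← hhalf j]
  congr 2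
  refine filter_congr fun j' hj' => ?_
  have hadj := (mem_neighborFinset _ _ _).mp hj'
  rw [← two_mul_val_sub_lt_iff_of_adj hadj.symm]
  have := two_mul_val_sub_ne_of_adj hhalf hadj
  omega

end CyclicGraph

section BoxProduct

variable {α β : Type*}

theorem SimpleGraph.boxProd_adj_and_fst_eq {G : SimpleGraph α} {H : SimpleGraph β}
    {p q : α × β} : (G □ H).Adj p q ∧ p.1 = q.1 ↔ p.1 = q.1 ∧ H.Adj p.2 q.2 := by
  rw [boxProd_adj]
  constructor
  · rintro ⟨⟨hG, -⟩ | ⟨hH, -⟩, h⟩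
    · exact absurd hG (h ▸ G.loopless.irrefl _)
    · exact ⟨h, hH⟩
  · rintro ⟨h, hH⟩
    exact ⟨Or.inr ⟨hH, h⟩, h⟩

theorem SimpleGraph.maxDegree_boxProd [Fintype α] [Fintype β] [Nonempty α] [Nonempty β]
    (G : SimpleGraph α) (H : SimpleGraph β) [DecidableRel G.Adj] [DecidableRel H.Adj]
    [DecidableRel (G □ H).Adj] : (G □ H).maxDegree = G.maxDegree + H.maxDegree := by
  refine le_antisymm (maxDegree_le_of_forall_degree_le _ _ fun p => ?_) ?_
  · rw [degree_boxProd]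
    exact add_le_add (G.degree_le_maxDegree _) (H.degree_le_maxDegree _)
  · obtain ⟨a, ha⟩ := G.exists_maximal_degree_vertex
    obtain ⟨b, hb⟩ := H.exists_maximal_degree_vertex
    have := (G □ H).degree_le_maxDegree (a, b)
    rwa [degree_boxProd, ← ha, ← hb] at this

theorem SimpleGraph.mul_maxDegree_eq_of_mul_degree_eq [Fintype α] [Nonempty α] [Fintype β]
    {H : SimpleGraph α} {G : SimpleGraph β} [DecidableRel H.Adj] [DecidableRel G.Adj]
    {k : ℕ} {f : α → β} (hf : Function.Surjective f) (h : ∀ v, k * H.degree v = G.degree (f v)) :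
    k * H.maxDegree = G.maxDegree := by
  refine le_antisymm ?_ (maxDegree_le_of_forall_degree_le _ _ fun w => ?_)
  · obtain ⟨v, hv⟩ := H.exists_maximal_degree_vertex
    rw [hv, h]
    exact G.degree_le_maxDegree _
  · obtain ⟨v, rfl⟩ := hf w
    rw [← h]
    exact Nat.mul_le_mul_left k (H.degree_le_maxDegree v)

end BoxProduct

section DirectionSubgraph

variable {α : Type*} [Fintype α] {n : ℕ} [NeZero n] {G' : SimpleGraph α}
  {G : SimpleGraph (ZMod n)} {Q : ZMod n → Prop} [DecidablePred Q]

/-- Since `stab` alternates along the edges of `G`, exactly one endpoint of each vertical edge is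
in `stab`, and the length class `Q` is measured from that endpoint. -/
theorem degree_eq_card_filter_of_adj_iff_vertical {stab : Set (α × ZMod n)}
    {H : SimpleGraph (α × ZMod n)}
    (hH : ∀ p q, H.Adj p q ↔ (G' □ G).Adj p q ∧ p.1 = q.1 ∧
      (p ∈ stab ∧ Q (q.2 - p.2) ∨ q ∈ stab ∧ Q (p.2 - q.2)))
    (halt : ∀ i j j', G.Adj j j' → ((i, j) ∈ stab ↔ (i, j') ∉ stab)) (p : α × ZMod n) :
    H.degree p =
      #{j' ∈ G.neighborFinset p.2 | if p ∈ stab then Q (j' - p.2) else Q (p.2 - j')} := by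
  obtain ⟨i, j⟩ := p
  rw [← card_neighborFinset_eq_degree, ← card_map (Function.Embedding.sectR i (ZMod n))]
  congr 1
  ext ⟨i', j'⟩
  simp only [mem_neighborFinset, hH, ← and_assoc, mem_map, mem_filter,
    Function.Embedding.sectR_apply, Prod.mk.injEq, exists_eq_right]
  rw [boxProd_adj_and_fst_eq]
  simp only [and_comm (b := i = i'), and_assoc, and_congr_right_iff]
  rintro rfl hadj
  have := halt i j j' hadj
  split_ifs <;> tauto

theorem degree_eq_card_filter_of_adj_iff_horizontal {stab : Set (ZMod n × α)}
    {H : SimpleGraph (ZMod n × α)}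
    (hH : ∀ p q, H.Adj p q ↔ (G □ G').Adj p q ∧ p.2 = q.2 ∧
      (p ∈ stab ∧ Q (q.1 - p.1) ∨ q ∈ stab ∧ Q (p.1 - q.1)))
    (halt : ∀ j i i', G.Adj i i' → ((i, j) ∈ stab ↔ (i', j) ∉ stab)) (p : ZMod n × α) :
    H.degree p =
      #{i' ∈ G.neighborFinset p.1 | if p ∈ stab then Q (i' - p.1) else Q (p.1 - i')} := by
  have hswap : ∀ p q, (H.comap (Equiv.prodComm α (ZMod n))).Adj p q ↔
      (G' □ G).Adj p q ∧ p.1 = q.1 ∧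
        (p ∈ Prod.swap ⁻¹' stab ∧ Q (q.2 - p.2) ∨ q ∈ Prod.swap ⁻¹' stab ∧ Q (p.2 - q.2)) :=
    fun p q => by rw [comap_adj, hH, ← (boxProdComm G' G).map_adj_iff]; rfl
  calc H.degree p = (H.comap (Equiv.prodComm α (ZMod n))).degree p.swap :=
        (Iso.comap (Equiv.prodComm α (ZMod n)) H).degree_eq p.swap
    _ = _ := degree_eq_card_filter_of_adj_iff_vertical hswap (fun i j j' => halt i j j') p.swap

end DirectionSubgraph

section HypergraphProduct

variable {n₁ n₂ : ℕ} {B₁ C₁ : Set (ZMod n₁)} {B₂ C₂ : Set (ZMod n₂)}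

theorem mem_stabSet_iff_notMem_of_adj_snd {G₂ : SimpleGraph (ZMod n₂)} (h₁ : IsCompl B₁ C₁)
    (h₂ : G₂.IsBipartiteWith B₂ C₂) (i : ZMod n₁) {j j' : ZMod n₂} (hadj : G₂.Adj j j') :
    (i, j) ∈ stabSet B₁ C₁ B₂ C₂ ↔ (i, j') ∉ stabSet B₁ C₁ B₂ C₂ := by
  have hi : i ∈ C₁ ↔ i ∉ B₁ := by rw [← h₁.compl_eq]; rfl
  have hj : j ∈ B₂ → j ∉ C₂ := fun h => Set.disjoint_left.mp h₂.disjoint h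
  have hj' : j' ∈ B₂ → j' ∉ C₂ := fun h => Set.disjoint_left.mp h₂.disjoint h
  have := h₂.mem_of_adj hadj
  simp only [stabSet, Set.mem_union, Set.mem_prod]
  tauto

theorem mem_stabSet_iff_notMem_of_adj_fst {G₁ : SimpleGraph (ZMod n₁)} (h₂ : IsCompl B₂ C₂)
    (h₁ : G₁.IsBipartiteWith B₁ C₁) (j : ZMod n₂) {i i' : ZMod n₁} (hadj : G₁.Adj i i') :
    (i, j) ∈ stabSet B₁ C₁ B₂ C₂ ↔ (i', j) ∉ stabSet B₁ C₁ B₂ C₂ := by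
  have hj : j ∈ C₂ ↔ j ∉ B₂ := by rw [← h₂.compl_eq]; rfl
  have hi : i ∈ B₁ → i ∉ C₁ := fun h => Set.disjoint_left.mp h₁.disjoint h
  have hi' : i' ∈ B₁ → i' ∉ C₁ := fun h => Set.disjoint_left.mp h₁.disjoint h
  have := h₁.mem_of_adj hadj
  simp only [stabSet, Set.mem_union, Set.mem_prod]
  tauto

variable [NeZero n₁] [NeZero n₂] {G₁ : SimpleGraph (ZMod n₁)} {G₂ : SimpleGraph (ZMod n₂)}
  {stab : Set (ZMod n₁ × ZMod n₂)}

theorem two_mul_degree_dirN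
    (hhalf : ∀ j, 2 * #{j' ∈ G₂.neighborFinset j | 2 * (j' - j).val ≤ n₂} = G₂.degree j)
    (halt : ∀ i j j', G₂.Adj j j' → ((i, j) ∈ stab ↔ (i, j') ∉ stab)) (p : ZMod n₁ × ZMod n₂) :
    2 * (dirN G₁ G₂ stab).degree p = G₂.degree p.2 := by
  rw [degree_eq_card_filter_of_adj_iff_vertical (Q := fun x => 2 * x.val ≤ n₂)
    (fun _ _ => Iff.rfl) halt]
  by_cases hp : p ∈ stab <;> simp only [hp, if_true, if_false]
  · exact hhalf p.2
  · exact two_mul_card_reverse_forward_eq_degree hhalf p.2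

theorem two_mul_degree_dirS
    (hhalf : ∀ j, 2 * #{j' ∈ G₂.neighborFinset j | 2 * (j' - j).val ≤ n₂} = G₂.degree j)
    (halt : ∀ i j j', G₂.Adj j j' → ((i, j) ∈ stab ↔ (i, j') ∉ stab)) (p : ZMod n₁ × ZMod n₂) :
    2 * (dirS G₁ G₂ stab).degree p = G₂.degree p.2 := by
  rw [degree_eq_card_filter_of_adj_iff_vertical (Q := fun x => n₂ < 2 * x.val)
    (fun _ _ => Iff.rfl) halt]
  by_cases hp : p ∈ stab <;> simp only [hp, if_true, if_false]
  · exact two_mul_card_backward_eq_degree hhalf p.2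
  · exact two_mul_card_reverse_backward_eq_degree hhalf p.2

theorem two_mul_degree_dirE
    (hhalf : ∀ i, 2 * #{i' ∈ G₁.neighborFinset i | 2 * (i' - i).val ≤ n₁} = G₁.degree i)
    (halt : ∀ j i i', G₁.Adj i i' → ((i, j) ∈ stab ↔ (i', j) ∉ stab)) (p : ZMod n₁ × ZMod n₂) :
    2 * (dirE G₁ G₂ stab).degree p = G₁.degree p.1 := by
  rw [degree_eq_card_filter_of_adj_iff_horizontal (Q := fun x => 2 * x.val ≤ n₁)
    (fun _ _ => Iff.rfl) halt]
  by_cases hp : p ∈ stab <;> simp only [hp, if_true, if_false]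
  · exact hhalf p.1
  · exact two_mul_card_reverse_forward_eq_degree hhalf p.1

theorem two_mul_degree_dirW
    (hhalf : ∀ i, 2 * #{i' ∈ G₁.neighborFinset i | 2 * (i' - i).val ≤ n₁} = G₁.degree i)
    (halt : ∀ j i i', G₁.Adj i i' → ((i, j) ∈ stab ↔ (i', j) ∉ stab)) (p : ZMod n₁ × ZMod n₂) :
    2 * (dirW G₁ G₂ stab).degree p = G₁.degree p.1 := by
  rw [degree_eq_card_filter_of_adj_iff_horizontal (Q := fun x => n₁ < 2 * x.val)
    (fun _ _ => Iff.rfl) halt]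
  by_cases hp : p ∈ stab <;> simp only [hp, if_true, if_false]
  · exact two_mul_card_backward_eq_degree hhalf p.1
  · exact two_mul_card_reverse_backward_eq_degree hhalf p.1

end HypergraphProduct

/-- tightness in Lemma 4 of the paper. If every vertex of `G₁` and `G₂` has
even degree and both labelings are balanced, then
`deg(T_N) + deg(T_S) + deg(T_E) + deg(T_W) = deg(T) = deg(G₁) + deg(G₂)`
for `T = G₁ □ G₂`. -/
theorem direction_subgraphs_maxDegree_tight {n₁ n₂ : ℕ} [NeZero n₁] [NeZero n₂]
    (G₁ : SimpleGraph (ZMod n₁)) (G₂ : SimpleGraph (ZMod n₂))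
    (B₁ C₁ : Set (ZMod n₁)) (B₂ C₂ : Set (ZMod n₂))
    (hcover₁ : B₁ ∪ C₁ = Set.univ) (hdisj₁ : Disjoint B₁ C₁)
    (hcover₂ : B₂ ∪ C₂ = Set.univ) (hdisj₂ : Disjoint B₂ C₂)
    (hbip₁ : ∀ u v, G₁.Adj u v → (u ∈ B₁ ∧ v ∈ C₁) ∨ (u ∈ C₁ ∧ v ∈ B₁))
    (hbip₂ : ∀ u v, G₂.Adj u v → (u ∈ B₂ ∧ v ∈ C₂) ∨ (u ∈ C₂ ∧ v ∈ B₂))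
    (heven₁ : ∀ i : ZMod n₁, Even (G₁.degree i))
    (heven₂ : ∀ j : ZMod n₂, Even (G₂.degree j))
    (hbal₁ : ∀ i : ZMod n₁,
      (deltaPlus G₁ i : ℤ) - (deltaMinus G₁ i : ℤ) = (G₁.degree i : ℤ) % 2)
    (hbal₂ : ∀ j : ZMod n₂,
      (deltaPlus G₂ j : ℤ) - (deltaMinus G₂ j : ℤ) = (G₂.degree j : ℤ) % 2) :
    (dirN G₁ G₂ (stabSet B₁ C₁ B₂ C₂)).maxDegree +
        (dirS G₁ G₂ (stabSet B₁ C₁ B₂ C₂)).maxDegree +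
        (dirE G₁ G₂ (stabSet B₁ C₁ B₂ C₂)).maxDegree +
        (dirW G₁ G₂ (stabSet B₁ C₁ B₂ C₂)).maxDegree = (G₁.boxProd G₂).maxDegree ∧
      (G₁.boxProd G₂).maxDegree = G₁.maxDegree + G₂.maxDegree := by
  have hvert (i : ZMod n₁) (j j' : ZMod n₂) (hadj : G₂.Adj j j') :=
    mem_stabSet_iff_notMem_of_adj_snd ⟨hdisj₁, codisjoint_iff.mpr hcover₁⟩ ⟨hdisj₂, hbip₂⟩ i hadj
  have hhor (j : ZMod n₂) (i i' : ZMod n₁) (hadj : G₁.Adj i i') :=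
    mem_stabSet_iff_notMem_of_adj_fst ⟨hdisj₂, codisjoint_iff.mpr hcover₂⟩ ⟨hdisj₁, hbip₁⟩ j hadj
  have hhalf₁ i := two_mul_card_forward_eq_degree (heven₁ i) (hbal₁ i)
  have hhalf₂ j := two_mul_card_forward_eq_degree (heven₂ j) (hbal₂ j)
  have hN := mul_maxDegree_eq_of_mul_degree_eq Prod.snd_surjective
    (two_mul_degree_dirN (G₁ := G₁) hhalf₂ hvert)
  have hS := mul_maxDegree_eq_of_mul_degree_eq Prod.snd_surjective
    (two_mul_degree_dirS (G₁ := G₁) hhalf₂ hvert)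
  have hE := mul_maxDegree_eq_of_mul_degree_eq Prod.fst_surjective
    (two_mul_degree_dirE (G₂ := G₂) hhalf₁ hhor)
  have hW := mul_maxDegree_eq_of_mul_degree_eq Prod.fst_surjective
    (two_mul_degree_dirW (G₂ := G₂) hhalf₁ hhor)
  have hT := maxDegree_boxProd G₁ G₂
  exact ⟨by omega, hT⟩
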